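/- A cherry reduction applied to an unrooted binary phylogenetic network on a leaf set X with |X| ≥ 2 yields an unrooted binary phylogenetic network (on X minus one leaf in the case of a cherry reduction, on X in the case of a reticulated-cherry reduction). -/

import Mathlib

/-!  Formalisation preliminaries for rooted and unrooted binary phylogenetic
networks, cherry reductions, cherry-reduction sequences and cherry-picking
sequences, following Döcker & Linz. -/

/-- A finite directed graph whose vertices are natural numbers. -/
structure DNet where
  verts : Finset ℕ
  arcs : Finset (ℕ × ℕ)

namespace DNet

/-- in-degree of a vertex -/
def inDeg (N : DNet) (v : ℕ) : ℕ := (N.arcs.filter (fun p => p.2 = v)).card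

/-- out-degree of a vertex -/
def outDeg (N : DNet) (v : ℕ) : ℕ := (N.arcs.filter (fun p => p.1 = v)).card

/-- the arc relation -/
def Arc (N : DNet) (u v : ℕ) : Prop := (u, v) ∈ N.arcs

/-- the digraph has no directed cycle -/
def Acyclic (N : DNet) : Prop := ∀ v, ¬ Relation.TransGen N.Arc v v

/-- root: in-degree 0 and out-degree 2 -/
def IsRoot (N : DNet) (v : ℕ) : Prop := v ∈ N.verts ∧ N.inDeg v = 0 ∧ N.outDeg v = 2

/-- leaf: in-degree 1 and out-degree 0 -/
def IsLeaf (N : DNet) (v : ℕ) : Prop := v ∈ N.verts ∧ N.inDeg v = 1 ∧ N.outDeg v = 0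

/-- tree vertex: in-degree 1 and out-degree 2 -/
def IsTreeVertex (N : DNet) (v : ℕ) : Prop := v ∈ N.verts ∧ N.inDeg v = 1 ∧ N.outDeg v = 2

/-- reticulation: in-degree 2 and out-degree 1 -/
def IsRet (N : DNet) (v : ℕ) : Prop := v ∈ N.verts ∧ N.inDeg v = 2 ∧ N.outDeg v = 1

/-- the network consists of a single vertex -/
def SingleVertex (N : DNet) : Prop := N.verts.card = 1 ∧ N.arcs = ∅

/-- the reticulation number of a rooted network: number of in-degree-2 vertices -/
def retNum (N : DNet) : ℕ := (N.verts.filter (fun v => N.inDeg v = 2)).card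

/-- tree-child: every vertex with a child has a child that is a tree vertex or a leaf -/
def TreeChild (N : DNet) : Prop :=
  ∀ v ∈ N.verts, N.outDeg v ≠ 0 → ∃ c, (v, c) ∈ N.arcs ∧ (N.IsTreeVertex c ∨ N.IsLeaf c)

/-- a stack: two reticulations joined by an arc -/
def HasStack (N : DNet) : Prop := ∃ u v, N.IsRet u ∧ N.IsRet v ∧ (u, v) ∈ N.arcs

/-- a pair of sibling reticulations: two reticulations with a common parent -/
def HasSiblingRets (N : DNet) : Prop :=
  ∃ p u v, u ≠ v ∧ N.IsRet u ∧ N.IsRet v ∧ (p, u) ∈ N.arcs ∧ (p, v) ∈ N.arcs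

/-- stack-free -/
def StackFree (N : DNet) : Prop := ¬ N.HasStack

end DNet

/-- `N` is a rooted binary phylogenetic network with leaf set `X`
(including the degenerate single-vertex network when `|X| = 1`). -/
def IsRootedBinaryNet (N : DNet) (X : Finset ℕ) : Prop :=
  (∃ x, X = {x} ∧ N.verts = {x} ∧ N.arcs = ∅) ∨
  ((∀ p ∈ N.arcs, p.1 ∈ N.verts ∧ p.2 ∈ N.verts) ∧
   (∀ p ∈ N.arcs, p.1 ≠ p.2) ∧
   N.Acyclic ∧
   (∃! ρ, ρ ∈ N.verts ∧ N.inDeg ρ = 0) ∧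
   (∀ v ∈ N.verts, N.IsRoot v ∨ N.IsLeaf v ∨ N.IsTreeVertex v ∨ N.IsRet v) ∧
   (∀ v, N.IsLeaf v ↔ v ∈ X))

/-- `[a,b]` is a cherry of the rooted network `N` (with `a` the leaf to be deleted). -/
def RCherry (N : DNet) (a b : ℕ) : Prop :=
  a ≠ b ∧ N.IsLeaf a ∧ N.IsLeaf b ∧ ∃ p, (p, a) ∈ N.arcs ∧ (p, b) ∈ N.arcs

/-- `(a,b)` is a reticulated cherry of the rooted network `N` with reticulation leaf `a`:
the parent of `a` is a reticulation and receives an arc from the parent of `b`. -/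
def RRetCherry (N : DNet) (a b : ℕ) : Prop :=
  a ≠ b ∧ N.IsLeaf a ∧ N.IsLeaf b ∧
  ∃ pa pb, (pa, a) ∈ N.arcs ∧ (pb, b) ∈ N.arcs ∧ N.IsRet pa ∧ (pb, pa) ∈ N.arcs

/-- `M` is obtained from the rooted network `N` by reducing the cherry `[a,b]`:
delete `a` and suppress (or, if it is the root, delete) the resulting degree-2 vertex. -/
def RReduceCherry (N M : DNet) (a b : ℕ) : Prop :=
  RCherry N a b ∧
  ∃ p, (p, a) ∈ N.arcs ∧ (p, b) ∈ N.arcs ∧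
    ((N.inDeg p = 0 ∧ M.verts = N.verts \ {a, p} ∧ M.arcs = N.arcs \ {(p, a), (p, b)}) ∨
     (∃ g, (g, p) ∈ N.arcs ∧ M.verts = N.verts \ {a, p} ∧
        M.arcs = insert (g, b) (N.arcs \ {(g, p), (p, a), (p, b)})))

/-- `M` is obtained from the rooted network `N` by reducing the reticulated cherry `(a,b)`
with reticulation leaf `a`: delete the reticulation arc `(p_b, p_a)` and suppress the two
resulting degree-2 vertices. -/
def RReduceRetCherry (N M : DNet) (a b : ℕ) : Prop :=
  RRetCherry N a b ∧
  ∃ pa pb qa qb, (pa, a) ∈ N.arcs ∧ (pb, b) ∈ N.arcs ∧ N.IsRet pa ∧ (pb, pa) ∈ N.arcs ∧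
    (qa, pa) ∈ N.arcs ∧ qa ≠ pb ∧ (qb, pb) ∈ N.arcs ∧
    M.verts = N.verts \ {pa, pb} ∧
    M.arcs = insert (qa, a) (insert (qb, b)
      (N.arcs \ {(pb, pa), (pa, a), (qa, pa), (pb, b), (qb, pb)}))

/-- A recorded reduction: either a cherry pair `[x,y]` or a reticulated-cherry pair `(x,y)`
(the deleted leaf, resp. the reticulation leaf, is listed first). -/
inductive Pick where
  | cherry (x y : ℕ)
  | ret (x y : ℕ)
deriving DecidableEq

namespace Pick

/-- first coordinate -/
def fst : Pick → ℕ
  | cherry x _ => x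
  | ret x _ => x

/-- second coordinate -/
def snd : Pick → ℕ
  | cherry _ y => y
  | ret _ y => y

/-- the pair contains the element `z` -/
def Contains (r : Pick) (z : ℕ) : Prop := r.fst = z ∨ r.snd = z

/-- the pair is a reticulated-cherry pair -/
def IsRetPair : Pick → Prop
  | cherry _ _ => False
  | ret _ _ => True

/-- the pair is a cherry pair -/
def IsCherryPair : Pick → Prop
  | cherry _ _ => True
  | ret _ _ => False

end Pick

/-- The step from `N` to `M` is the cherry reduction recorded by the pick `r`
(rooted version). -/
def RStep (N M : DNet) : Pick → Prop
  | .cherry x y => RReduceCherry N M x y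
  | .ret x y => RReduceRetCherry N M x y

/-- `(Ns 0, …, Ns k)` is a cherry-reduction sequence of rooted networks whose associated
cherry-picking sequence is `(rs 0, …, rs (k-1))`. -/
def RCherrySeq (Ns : ℕ → DNet) (rs : ℕ → Pick) (k : ℕ) : Prop :=
  ∀ i < k, RStep (Ns i) (Ns (i + 1)) (rs i)

/-- `(Ns 0, …, Ns k)` is a cherry-reduction sequence of rooted networks. -/
def RReductionSeq (Ns : ℕ → DNet) (k : ℕ) : Prop :=
  ∀ i < k, ∃ r, RStep (Ns i) (Ns (i + 1)) r

/-- `R` is a rooted orchard network: it admits a complete cherry-reduction sequence. -/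
def Orchard (R : DNet) : Prop :=
  ∃ Ns k, Ns 0 = R ∧ RReductionSeq Ns k ∧ (Ns k).SingleVertex

/-- `j = s(i)`: the smallest index `j > i` (within the sequence of length `k`) such that
`rs j` contains the first coordinate of `rs i`. -/
def SuccAt (rs : ℕ → Pick) (k i j : ℕ) : Prop :=
  i < j ∧ j < k ∧ (rs j).Contains (rs i).fst ∧
  ∀ l, i < l → l < j → ¬ (rs l).Contains (rs i).fst

/-- Property (P1): the successor pair of every reticulated-cherry pair, if it exists,
is a cherry pair. -/
def SeqP1 (rs : ℕ → Pick) (k : ℕ) : Prop :=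
  ∀ i j, (rs i).IsRetPair → SuccAt rs k i j → (rs j).IsCherryPair

/-- Property (P2): no element of the sequence is the successor pair of two distinct
reticulated-cherry pairs. -/
def SeqP2 (rs : ℕ → Pick) (k : ℕ) : Prop :=
  ∀ i i' j, i ≠ i' → (rs i).IsRetPair → (rs i').IsRetPair →
    SuccAt rs k i j → SuccAt rs k i' j → False

/-- A tree-child cherry-picking sequence: one satisfying (P1) and (P2). -/
def TreeChildSeq (rs : ℕ → Pick) (k : ℕ) : Prop := SeqP1 rs k ∧ SeqP2 rs k

/-- Property (P3): the first coordinate of each pair does not occur as the second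
coordinate of any later pair. -/
def SeqP3 (rs : ℕ → Pick) (k : ℕ) : Prop :=
  ∀ i j, i < j → j < k → (rs i).fst ≠ (rs j).snd

/-- A finite undirected graph whose vertices are natural numbers. -/
structure UNet where
  verts : Finset ℕ
  edges : Finset (Sym2 ℕ)

namespace UNet

/-- degree of a vertex -/
def deg (U : UNet) (v : ℕ) : ℕ := (U.edges.filter (fun e => v ∈ e)).card

/-- adjacency -/
def Adj (U : UNet) (u v : ℕ) : Prop := u ≠ v ∧ s(u, v) ∈ U.edges

/-- connectedness -/
def Connected (U : UNet) : Prop :=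
  ∀ u ∈ U.verts, ∀ v ∈ U.verts, Relation.ReflTransGen U.Adj u v

/-- leaf: degree-1 vertex -/
def IsLeaf (U : UNet) (v : ℕ) : Prop := v ∈ U.verts ∧ U.deg v = 1

/-- the network consists of a single vertex -/
def SingleVertex (U : UNet) : Prop := U.verts.card = 1 ∧ U.edges = ∅

/-- the reticulation number of an unrooted network: `|E| - (|V| - 1)` -/
def retNum (U : UNet) : ℕ := U.edges.card - (U.verts.card - 1)

end UNet

/-- `U` is an unrooted binary phylogenetic network with leaf set `X`
(including the degenerate single-vertex network when `|X| = 1`). -/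
def IsUnrootedBinaryNet (U : UNet) (X : Finset ℕ) : Prop :=
  (∃ x, X = {x} ∧ U.verts = {x} ∧ U.edges = ∅) ∨
  ((∀ e ∈ U.edges, ¬ e.IsDiag ∧ ∀ v ∈ e, v ∈ U.verts) ∧
   U.Connected ∧
   (∀ v ∈ U.verts, U.deg v = 1 ∨ U.deg v = 3) ∧
   (∀ v, U.IsLeaf v ↔ v ∈ X))

/-- `[a,b]` is a cherry of the unrooted network `U`. -/
def UCherry (U : UNet) (a b : ℕ) : Prop :=
  a ≠ b ∧ U.IsLeaf a ∧ U.IsLeaf b ∧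
  ((∃ p, s(a, p) ∈ U.edges ∧ s(b, p) ∈ U.edges ∧ p ≠ a ∧ p ≠ b) ∨ U.edges = {s(a, b)})

/-- the edge `{u,v}` lies on a cycle of `U` -/
def UOnCycle (U : UNet) (u v : ℕ) : Prop :=
  s(u, v) ∈ U.edges ∧
  Relation.ReflTransGen (fun x y => x ≠ y ∧ s(x, y) ∈ U.edges ∧ s(x, y) ≠ s(u, v)) u v

/-- `(a,b)` is a reticulated cherry of the unrooted network `U` with reticulation
edge `{u,v}`. -/
def URetCherry (U : UNet) (a b : ℕ) : Prop :=
  a ≠ b ∧ U.IsLeaf a ∧ U.IsLeaf b ∧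
  ∃ u v, s(a, u) ∈ U.edges ∧ s(u, v) ∈ U.edges ∧ s(v, b) ∈ U.edges ∧
    u ≠ v ∧ u ≠ a ∧ v ≠ b ∧ UOnCycle U u v

/-- `W` is obtained from `U` by reducing the cherry `[a,b]`: delete `a` and, if `U` has
at least two edges, suppress the resulting degree-2 vertex. -/
def UReduceCherry (U W : UNet) (a b : ℕ) : Prop :=
  UCherry U a b ∧
  ((U.edges = {s(a, b)} ∧ W.verts = U.verts \ {a} ∧ W.edges = ∅) ∨
   (∃ p g, s(a, p) ∈ U.edges ∧ s(b, p) ∈ U.edges ∧ s(p, g) ∈ U.edges ∧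
      p ≠ a ∧ p ≠ b ∧ g ≠ a ∧ g ≠ b ∧ g ≠ p ∧
      W.verts = U.verts \ {a, p} ∧
      W.edges = insert s(b, g) (U.edges \ {s(a, p), s(b, p), s(p, g)})))

/-- `W` is obtained from `U` by reducing the reticulated cherry `(a,b)`: delete the
reticulation edge `{u,v}` and suppress the two resulting degree-2 vertices. -/
def UReduceRetCherry (U W : UNet) (a b : ℕ) : Prop :=
  URetCherry U a b ∧
  ∃ u v ga gb, s(a, u) ∈ U.edges ∧ s(u, v) ∈ U.edges ∧ s(v, b) ∈ U.edges ∧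
    u ≠ v ∧ u ≠ a ∧ v ≠ b ∧ UOnCycle U u v ∧
    s(u, ga) ∈ U.edges ∧ ga ≠ a ∧ ga ≠ v ∧ ga ≠ u ∧
    s(v, gb) ∈ U.edges ∧ gb ≠ b ∧ gb ≠ u ∧ gb ≠ v ∧
    W.verts = U.verts \ {u, v} ∧
    W.edges = insert s(a, ga) (insert s(b, gb)
      (U.edges \ {s(u, v), s(a, u), s(u, ga), s(v, b), s(v, gb)}))

/-- The step from `U` to `W` is the cherry reduction recorded by the pick `r`
(unrooted version). -/
def UStep (U W : UNet) : Pick → Prop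
  | .cherry x y => UReduceCherry U W x y
  | .ret x y => UReduceRetCherry U W x y

/-- `(Us 0, …, Us k)` is a cherry-reduction sequence of unrooted networks whose associated
cherry-picking sequence is `(rs 0, …, rs (k-1))`. -/
def UCherrySeq (Us : ℕ → UNet) (rs : ℕ → Pick) (k : ℕ) : Prop :=
  ∀ i < k, UStep (Us i) (Us (i + 1)) (rs i)

/-- `(Us 0, …, Us k)` is a cherry-reduction sequence of unrooted networks. -/
def UReductionSeq (Us : ℕ → UNet) (k : ℕ) : Prop :=
  ∀ i < k, ∃ r, UStep (Us i) (Us (i + 1)) r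

/-- The rooted network `R` is an orientation of the unrooted network `U`: `U` is obtained
from `R` by forgetting arc directions and suppressing the root. -/
def IsOrientationOf (R : DNet) (U : UNet) : Prop :=
  (R.arcs = ∅ ∧ U.edges = ∅ ∧ U.verts = R.verts) ∨
  (∃ ρ c₁ c₂, ρ ∈ R.verts ∧ R.inDeg ρ = 0 ∧ c₁ ≠ c₂ ∧
    (ρ, c₁) ∈ R.arcs ∧ (ρ, c₂) ∈ R.arcs ∧
    U.verts = R.verts.erase ρ ∧
    U.edges = insert s(c₁, c₂)
      ((R.arcs.filter (fun p => p.1 ≠ ρ)).image (fun p => s(p.1, p.2))))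

/-- `U` is an unrooted tree-child network on `X`: it has a tree-child orientation. -/
def UnrootedTreeChild (U : UNet) (X : Finset ℕ) : Prop :=
  ∃ R : DNet, IsRootedBinaryNet R X ∧ R.TreeChild ∧ IsOrientationOf R U

/-- The pick `r` is one of the picks associated with the recorded reduction `p`:
it must agree with `p` on cherry reductions, and may swap the two coordinates of a
reticulated-cherry reduction. -/
def PickAssoc : Pick → Pick → Prop
  | .cherry x y, r => r = .cherry x y
  | .ret x y, r => r = .ret x y ∨ r = .ret y x

/-- `X`-labelled isomorphism of unrooted networks. -/
def UIso (X : Finset ℕ) (U W : UNet) : Prop :=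
  ∃ f : ℕ → ℕ, Set.BijOn f ↑U.verts ↑W.verts ∧ (∀ x ∈ X, f x = x) ∧
    W.edges = U.edges.image (Sym2.map f)


/-- Auxiliary: a degree-one vertex has a unique incident edge. -/
lemma uniqueEdgeAux {U : UNet} {a p : ℕ} (h1 : U.deg a = 1) (h2 : s(a,p) ∈ U.edges) :
    ∀ e ∈ U.edges, a ∈ e → e = s(a,p) := by
  intro e he hae
  have h2' : s(a,p) ∈ U.edges.filter (fun e => a ∈ e) :=
    Finset.mem_filter.mpr ⟨h2, Sym2.mem_mk_left a p⟩
  have he' : e ∈ U.edges.filter (fun e => a ∈ e) := Finset.mem_filter.mpr ⟨he, hae⟩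
  have hle : (U.edges.filter (fun e => a ∈ e)).card ≤ 1 := le_of_eq h1
  exact Finset.card_le_one.mp hle e he' _ h2'

/-- Auxiliary: a degree-three vertex with three given distinct incident edges has no
other incident edges. -/
lemma threeEdgesAux {U : UNet} {p : ℕ} (hdeg : U.deg p = 3) {e1 e2 e3 : Sym2 ℕ}
    (h1 : e1 ∈ U.edges) (hp1 : p ∈ e1) (h2 : e2 ∈ U.edges) (hp2 : p ∈ e2)
    (h3 : e3 ∈ U.edges) (hp3 : p ∈ e3) (h12 : e1 ≠ e2) (h13 : e1 ≠ e3) (h23 : e2 ≠ e3) :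
    ∀ e ∈ U.edges, p ∈ e → e = e1 ∨ e = e2 ∨ e = e3 := by
  have hsub : ({e1, e2, e3} : Finset (Sym2 ℕ)) ⊆ U.edges.filter (fun e => p ∈ e) := by
    intro e he
    simp only [Finset.mem_insert, Finset.mem_singleton] at he
    rcases he with rfl | rfl | rfl <;> exact Finset.mem_filter.mpr ⟨by assumption, by assumption⟩
  have hcard : ({e1, e2, e3} : Finset (Sym2 ℕ)).card = 3 := by
    rw [Finset.card_insert_of_notMem (by simp [h12, h13]),
      Finset.card_insert_of_notMem (by simp [h23]), Finset.card_singleton]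
  have hle : (U.edges.filter (fun e => p ∈ e)).card ≤ 3 := le_of_eq hdeg
  have heq := Finset.eq_of_subset_of_card_le hsub (by rw [hcard]; exact hle)
  intro e he hpe
  have : e ∈ ({e1, e2, e3} : Finset (Sym2 ℕ)) := by
    rw [heq]; exact Finset.mem_filter.mpr ⟨he, hpe⟩
  simpa using this

/-- Auxiliary: adjacency in an unrooted network is symmetric. -/
lemma adjSymmAux (W : UNet) : Symmetric W.Adj := by
  intro x y h
  exact ⟨Ne.symm h.1, by rw [Sym2.eq_swap]; exact h.2⟩

set_option maxHeartbeats 4000000 in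
/-- A cherry reduction applied to an unrooted binary phylogenetic network on
`X` with `|X| ≥ 2` yields an unrooted binary phylogenetic network (on `X \ {a}` for a
cherry reduction, on `X` for a reticulated-cherry reduction). -/
theorem unrooted_cherry_reduction_closed (U W : UNet) (X : Finset ℕ) (a b : ℕ)
    (hU : IsUnrootedBinaryNet U X) (hX : 2 ≤ X.card) :
    (UReduceCherry U W a b → IsUnrootedBinaryNet W (X.erase a)) ∧
    (UReduceRetCherry U W a b → IsUnrootedBinaryNet W X) := by
  have hnd : (∀ e ∈ U.edges, ¬ e.IsDiag ∧ ∀ v ∈ e, v ∈ U.verts) ∧ U.Connected ∧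
      (∀ v ∈ U.verts, U.deg v = 1 ∨ U.deg v = 3) ∧ (∀ v, U.IsLeaf v ↔ v ∈ X) := by
    rcases hU with ⟨x, hX1, -, -⟩ | h
    · rw [hX1] at hX; simp at hX
    · exact h
  obtain ⟨hE, hConn, hDeg, hLeaf⟩ := hnd
  constructor
  · rintro ⟨⟨hab, ⟨haV, haD⟩, ⟨hbV, hbD⟩, -⟩, hred⟩
    rcases hred with ⟨hEab, hWv, hWe⟩ | ⟨p, g, hap, hbp, hpg, hpa, hpb, hga, hgb, hgp, hWv, hWe⟩
    · -- single-edge case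
      left
      have hsub : U.verts ⊆ {a, b} := by
        intro x hx
        have hle : U.deg x ≤ 1 := by
          have h := Finset.card_filter_le ({s(a,b)} : Finset (Sym2 ℕ)) (fun e => x ∈ e)
          simp only [Finset.card_singleton] at h
          unfold UNet.deg
          rw [hEab]
          exact h
        have h1 : U.deg x = 1 := by rcases hDeg x hx with h | h <;> omega
        have hxe : x ∈ s(a,b) := by
          by_contra hxe
          have hemp : U.edges.filter (fun e => x ∈ e) = ∅ := by
            rw [hEab]
            ext e
            simp only [Finset.mem_filter, Finset.mem_singleton, Finset.notMem_empty,
              iff_false, not_and]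
            rintro rfl
            exact hxe
          unfold UNet.deg at h1
          rw [hemp] at h1
          simp at h1
        simpa using hxe
      have hvs : U.verts = {a, b} := by
        apply Finset.Subset.antisymm hsub
        intro x hx
        simp only [Finset.mem_insert, Finset.mem_singleton] at hx
        rcases hx with rfl | rfl
        · exact haV
        · exact hbV
      have hXab : X = {a, b} := by
        ext x
        rw [← hLeaf]
        constructor
        · rintro ⟨hxv, -⟩
          rw [hvs] at hxv
          exact hxv
        · intro hx
          simp only [Finset.mem_insert, Finset.mem_singleton] at hx
          rcases hx with rfl | rfl
          · exact ⟨haV, haD⟩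
          · exact ⟨hbV, hbD⟩
      refine ⟨b, ?_, ?_, hWe⟩
      · rw [hXab]
        ext x
        simp only [Finset.mem_erase, Finset.mem_insert, Finset.mem_singleton]
        constructor
        · rintro ⟨hxa, rfl | rfl⟩
          · exact absurd rfl hxa
          · rfl
        · rintro rfl
          exact ⟨Ne.symm hab, Or.inr rfl⟩
      · rw [hWv, hvs]
        ext x
        simp only [Finset.mem_sdiff, Finset.mem_insert, Finset.mem_singleton]
        constructor
        · rintro ⟨rfl | rfl, hxa⟩
          · exact absurd rfl hxa
          · rfl
        · rintro rfl
          exact ⟨Or.inr rfl, Ne.symm hab⟩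
    · -- suppression case
      right
      have haU : ∀ e ∈ U.edges, a ∈ e → e = s(a,p) := uniqueEdgeAux haD hap
      have hbU : ∀ e ∈ U.edges, b ∈ e → e = s(b,p) := uniqueEdgeAux hbD hbp
      have hpV : p ∈ U.verts := (hE _ hap).2 p (Sym2.mem_mk_right a p)
      have hgV : g ∈ U.verts := (hE _ hpg).2 g (Sym2.mem_mk_right p g)
      have hdp : U.deg p = 3 := by
        rcases hDeg p hpV with h1 | h3
        · exfalso
          have hpu := uniqueEdgeAux h1 (show s(p,g) ∈ U.edges from hpg)
          have hcon := hpu _ hap (Sym2.mem_mk_right a p)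
          simp only [Sym2.eq_iff] at hcon
          omega
        · exact h3
      have hpU : ∀ e ∈ U.edges, p ∈ e → e = s(a,p) ∨ e = s(b,p) ∨ e = s(p,g) :=
        threeEdgesAux hdp hap (Sym2.mem_mk_right a p) hbp (Sym2.mem_mk_right b p)
          hpg (Sym2.mem_mk_left p g)
          (by simp only [ne_eq, Sym2.eq_iff]; omega)
          (by simp only [ne_eq, Sym2.eq_iff]; omega)
          (by simp only [ne_eq, Sym2.eq_iff]; omega)
      have hbg : s(b,g) ∉ U.edges := by
        intro h
        have hcon := hbU _ h (Sym2.mem_mk_left b g)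
        simp only [Sym2.eq_iff] at hcon
        omega
      have hdegW : ∀ x, x ≠ a → x ≠ p → W.deg x = U.deg x := by
        intro x hxa hxp
        by_cases hxb : x = b
        · obtain rfl := hxb.symm
          have h1 : W.edges.filter (fun e => b ∈ e) = {s(b,g)} := by
            ext e
            simp only [Finset.mem_filter, hWe, Finset.mem_insert, Finset.mem_sdiff,
              Finset.mem_singleton, not_or]
            constructor
            · rintro ⟨rfl | ⟨heU, -, hne2, -⟩, hbe⟩
              · rfl
              · exact absurd (hbU e heU hbe) hne2
            · rintro rfl
              exact ⟨Or.inl rfl, Sym2.mem_mk_left b g⟩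
          have h2 : U.edges.filter (fun e => b ∈ e) = {s(b,p)} := by
            ext e
            simp only [Finset.mem_filter, Finset.mem_singleton]
            constructor
            · rintro ⟨heU, hbe⟩
              exact hbU e heU hbe
            · rintro rfl
              exact ⟨hbp, Sym2.mem_mk_left b p⟩
          unfold UNet.deg
          rw [h1, h2]
          simp
        · by_cases hxg : x = g
          · obtain rfl := hxg.symm
            have hmem : s(p,g) ∈ U.edges.filter (fun e => g ∈ e) :=
              Finset.mem_filter.mpr ⟨hpg, Sym2.mem_mk_right p g⟩
            have h1 : W.edges.filter (fun e => g ∈ e)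
                = insert s(b,g) ((U.edges.filter (fun e => g ∈ e)).erase s(p,g)) := by
              ext e
              simp only [Finset.mem_filter, hWe, Finset.mem_insert, Finset.mem_sdiff,
                Finset.mem_singleton, Finset.mem_erase, not_or, ne_eq]
              constructor
              · rintro ⟨rfl | ⟨heU, -, -, hne3⟩, hge⟩
                · exact Or.inl rfl
                · exact Or.inr ⟨hne3, heU, hge⟩
              · rintro (rfl | ⟨hne3, heU, hge⟩)
                · exact ⟨Or.inl rfl, Sym2.mem_mk_right b g⟩
                · refine ⟨Or.inr ⟨heU, ?_, ?_, hne3⟩, hge⟩ <;>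
                    (intro h; subst h; simp only [Sym2.mem_iff] at hge; omega)
            have hnotmem : s(b,g) ∉ (U.edges.filter (fun e => g ∈ e)).erase s(p,g) := by
              intro h
              exact hbg (Finset.mem_filter.mp (Finset.mem_of_mem_erase h)).1
            have hge1 : 1 ≤ (U.edges.filter (fun e => g ∈ e)).card :=
              Finset.card_pos.mpr ⟨_, hmem⟩
            unfold UNet.deg
            rw [h1, Finset.card_insert_of_notMem hnotmem, Finset.card_erase_of_mem hmem]
            omega
          · have h1 : W.edges.filter (fun e => x ∈ e) = U.edges.filter (fun e => x ∈ e) := by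
              ext e
              simp only [Finset.mem_filter, hWe, Finset.mem_insert, Finset.mem_sdiff,
                Finset.mem_singleton, not_or]
              constructor
              · rintro ⟨rfl | ⟨heU, -⟩, hxe⟩
                · exfalso; simp only [Sym2.mem_iff] at hxe; omega
                · exact ⟨heU, hxe⟩
              · rintro ⟨heU, hxe⟩
                refine ⟨Or.inr ⟨heU, ?_, ?_, ?_⟩, hxe⟩ <;>
                  (intro h; subst h; simp only [Sym2.mem_iff] at hxe; omega)
            unfold UNet.deg
            rw [h1]
      refine ⟨?_, ?_, ?_, ?_⟩
      · intro e he
        rw [hWe] at he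
        simp only [Finset.mem_insert, Finset.mem_sdiff, Finset.mem_singleton, not_or] at he
        rcases he with rfl | ⟨heU, hne1, hne2, hne3⟩
        · refine ⟨by simp only [Sym2.mk_isDiag_iff]; omega, ?_⟩
          intro x hx
          rw [hWv]
          simp only [Finset.mem_sdiff, Finset.mem_insert, Finset.mem_singleton, not_or]
          simp only [Sym2.mem_iff] at hx
          rcases hx with rfl | rfl
          · exact ⟨hbV, by omega, by omega⟩
          · exact ⟨hgV, by omega, by omega⟩
        · refine ⟨(hE e heU).1, ?_⟩
          intro x hx
          rw [hWv]
          simp only [Finset.mem_sdiff, Finset.mem_insert, Finset.mem_singleton, not_or]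
          refine ⟨(hE e heU).2 x hx, ?_, ?_⟩
          · rintro rfl
            exact hne1 (haU e heU hx)
          · rintro rfl
            rcases hpU e heU hx with h | h | h
            exacts [hne1 h, hne2 h, hne3 h]
      · intro x hx y hy
        rw [hWv] at hx hy
        simp only [Finset.mem_sdiff, Finset.mem_insert, Finset.mem_singleton, not_or] at hx hy
        obtain ⟨hxV, hxa, hxp⟩ := hx
        obtain ⟨hyV, hya, hyp⟩ := hy
        have hadj : W.Adj b g := ⟨by omega, by rw [hWe]; exact Finset.mem_insert_self _ _⟩
        have key : ∀ z w, U.Adj z w → Relation.ReflTransGen W.Adj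
            (if z = a then b else if z = p then g else z)
            (if w = a then b else if w = p then g else w) := by
          rintro z w ⟨hzwne, hzwE⟩
          by_cases hza : z = a
          · obtain rfl := hza.symm
            have hwp : w = p := by
              have h := haU _ hzwE (Sym2.mem_mk_left a w)
              simp only [Sym2.eq_iff] at h
              omega
            obtain rfl := hwp.symm
            rw [if_pos rfl, if_neg hpa, if_pos rfl]
            exact Relation.ReflTransGen.single hadj
          · by_cases hwa : w = a
            · obtain rfl := hwa.symm
              have hzp : z = p := by
                have h := haU _ hzwE (Sym2.mem_mk_right z a)
                simp only [Sym2.eq_iff] at h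
                omega
              obtain rfl := hzp.symm
              rw [if_neg hpa, if_pos rfl, if_pos rfl]
              exact Relation.ReflTransGen.single (adjSymmAux W hadj)
            · by_cases hzp : z = p
              · obtain rfl := hzp.symm
                rcases hpU _ hzwE (Sym2.mem_mk_left p w) with h | h | h
                · exfalso; simp only [Sym2.eq_iff] at h; omega
                · have hwb : w = b := by simp only [Sym2.eq_iff] at h; omega
                  obtain rfl := hwb.symm
                  rw [if_neg hpa, if_pos rfl, if_neg (show b ≠ a by omega),
                    if_neg (show b ≠ p by omega)]
                  exact Relation.ReflTransGen.single (adjSymmAux W hadj)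
                · have hwg : w = g := by simp only [Sym2.eq_iff] at h; omega
                  obtain rfl := hwg.symm
                  rw [if_neg hpa, if_pos rfl, if_neg (show g ≠ a by omega),
                    if_neg (show g ≠ p by omega)]
              · by_cases hwp : w = p
                · obtain rfl := hwp.symm
                  rcases hpU _ hzwE (Sym2.mem_mk_right z p) with h | h | h
                  · exfalso; simp only [Sym2.eq_iff] at h; omega
                  · have hzb : z = b := by simp only [Sym2.eq_iff] at h; omega
                    obtain rfl := hzb.symm
                    rw [if_neg (show b ≠ a by omega), if_neg (show b ≠ p by omega),
                      if_neg hpa, if_pos rfl]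
                    exact Relation.ReflTransGen.single hadj
                  · have hzg : z = g := by simp only [Sym2.eq_iff] at h; omega
                    obtain rfl := hzg.symm
                    rw [if_neg (show g ≠ a by omega), if_neg (show g ≠ p by omega),
                      if_neg hpa, if_pos rfl]
                · rw [if_neg hza, if_neg hzp, if_neg hwa, if_neg hwp]
                  refine Relation.ReflTransGen.single ⟨hzwne, ?_⟩
                  rw [hWe]
                  refine Finset.mem_insert_of_mem (Finset.mem_sdiff.mpr ⟨hzwE, ?_⟩)
                  simp only [Finset.mem_insert, Finset.mem_singleton, not_or]
                  refine ⟨?_, ?_, ?_⟩ <;>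
                    (intro h; simp only [Sym2.eq_iff] at h; omega)
        have hpath := Relation.ReflTransGen.lift'
          (fun t => if t = a then b else if t = p then g else t) key x y (hConn x hxV y hyV)
        simpa [Function.onFun, hxa, hxp, hya, hyp] using hpath
      · intro x hx
        rw [hWv] at hx
        simp only [Finset.mem_sdiff, Finset.mem_insert, Finset.mem_singleton, not_or] at hx
        rw [hdegW x hx.2.1 hx.2.2]
        exact hDeg x hx.1
      · intro x
        constructor
        · rintro ⟨hxV, hxD⟩
          rw [hWv] at hxV
          simp only [Finset.mem_sdiff, Finset.mem_insert, Finset.mem_singleton, not_or] at hxV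
          rw [hdegW x hxV.2.1 hxV.2.2] at hxD
          exact Finset.mem_erase.mpr ⟨hxV.2.1, (hLeaf x).mp ⟨hxV.1, hxD⟩⟩
        · intro hx
          obtain ⟨hxa, hxX⟩ := Finset.mem_erase.mp hx
          obtain ⟨hxV, hxD⟩ := (hLeaf x).mpr hxX
          have hxp : x ≠ p := by rintro rfl; omega
          refine ⟨?_, by rw [hdegW x hxa hxp]; exact hxD⟩
          rw [hWv]
          simp only [Finset.mem_sdiff, Finset.mem_insert, Finset.mem_singleton, not_or]
          exact ⟨hxV, hxa, hxp⟩
  · rintro ⟨⟨hab, ⟨haV, haD⟩, ⟨hbV, hbD⟩, -⟩, u, v, ga, gb, hau, huvE, hvbE, huv, hua, hvbne,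
      hcyc, hugaE, hgaa, hgav, hgau, hvgbE, hgbb, hgbu, hgbv, hWv, hWe⟩
    right
    have haU : ∀ e ∈ U.edges, a ∈ e → e = s(a,u) := uniqueEdgeAux haD hau
    have hbvE : s(b,v) ∈ U.edges := by rw [Sym2.eq_swap]; exact hvbE
    have hbU : ∀ e ∈ U.edges, b ∈ e → e = s(b,v) := uniqueEdgeAux hbD hbvE
    have hva : v ≠ a := by
      intro hq
      rw [hq] at hvgbE
      have h := haU _ hvgbE (Sym2.mem_mk_left a gb)
      simp only [Sym2.eq_iff] at h
      omega
    have hub : u ≠ b := by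
      intro hq
      rw [hq] at hugaE
      have h := hbU _ hugaE (Sym2.mem_mk_left b ga)
      simp only [Sym2.eq_iff] at h
      omega
    have huV : u ∈ U.verts := (hE _ hau).2 u (Sym2.mem_mk_right a u)
    have hvV : v ∈ U.verts := (hE _ hvbE).2 v (Sym2.mem_mk_left v b)
    have hgaV : ga ∈ U.verts := (hE _ hugaE).2 ga (Sym2.mem_mk_right u ga)
    have hgbV : gb ∈ U.verts := (hE _ hvgbE).2 gb (Sym2.mem_mk_right v gb)
    have hgab : ga ≠ b := by
      intro hq
      rw [hq] at hugaE
      have h := hbU _ hugaE (Sym2.mem_mk_right u b)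
      simp only [Sym2.eq_iff] at h
      omega
    have hgba : gb ≠ a := by
      intro hq
      rw [hq] at hvgbE
      have h := haU _ hvgbE (Sym2.mem_mk_right v a)
      simp only [Sym2.eq_iff] at h
      omega
    have hdu : U.deg u = 3 := by
      rcases hDeg u huV with h1 | h3
      · exfalso
        have huu := uniqueEdgeAux h1 (show s(u,v) ∈ U.edges from huvE)
        have h := huu _ hau (Sym2.mem_mk_right a u)
        simp only [Sym2.eq_iff] at h
        omega
      · exact h3
    have hdv : U.deg v = 3 := by
      rcases hDeg v hvV with h1 | h3
      · exfalso
        have hvv := uniqueEdgeAux h1 (show s(v,b) ∈ U.edges from hvbE)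
        have h := hvv _ huvE (Sym2.mem_mk_right u v)
        simp only [Sym2.eq_iff] at h
        omega
      · exact h3
    have huU : ∀ e ∈ U.edges, u ∈ e → e = s(a,u) ∨ e = s(u,v) ∨ e = s(u,ga) :=
      threeEdgesAux hdu hau (Sym2.mem_mk_right a u) huvE (Sym2.mem_mk_left u v)
        hugaE (Sym2.mem_mk_left u ga)
        (by simp only [ne_eq, Sym2.eq_iff]; omega)
        (by simp only [ne_eq, Sym2.eq_iff]; omega)
        (by simp only [ne_eq, Sym2.eq_iff]; omega)
    have hvU : ∀ e ∈ U.edges, v ∈ e → e = s(u,v) ∨ e = s(v,b) ∨ e = s(v,gb) :=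
      threeEdgesAux hdv huvE (Sym2.mem_mk_right u v) hvbE (Sym2.mem_mk_left v b)
        hvgbE (Sym2.mem_mk_left v gb)
        (by simp only [ne_eq, Sym2.eq_iff]; omega)
        (by simp only [ne_eq, Sym2.eq_iff]; omega)
        (by simp only [ne_eq, Sym2.eq_iff]; omega)
    have hagaE : s(a,ga) ∉ U.edges := by
      intro h
      have hc := haU _ h (Sym2.mem_mk_left a ga)
      simp only [Sym2.eq_iff] at hc
      omega
    have hbgbE : s(b,gb) ∉ U.edges := by
      intro h
      have hc := hbU _ h (Sym2.mem_mk_left b gb)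
      simp only [Sym2.eq_iff] at hc
      omega
    have hdegW : ∀ x, x ≠ u → x ≠ v → W.deg x = U.deg x := by
      intro x hxu hxv
      by_cases hxa : x = a
      · obtain rfl := hxa.symm
        have h1 : W.edges.filter (fun e => a ∈ e) = {s(a,ga)} := by
          ext e
          simp only [Finset.mem_filter, hWe, Finset.mem_insert, Finset.mem_sdiff,
            Finset.mem_singleton, not_or]
          constructor
          · rintro ⟨rfl | rfl | ⟨heU, -, hne2, -, -, -⟩, hae⟩
            · rfl
            · exfalso; simp only [Sym2.mem_iff] at hae; omega
            · exact absurd (haU e heU hae) hne2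
          · rintro rfl
            exact ⟨Or.inl rfl, Sym2.mem_mk_left a ga⟩
        have h2 : U.edges.filter (fun e => a ∈ e) = {s(a,u)} := by
          ext e
          simp only [Finset.mem_filter, Finset.mem_singleton]
          constructor
          · rintro ⟨heU, hae⟩
            exact haU e heU hae
          · rintro rfl
            exact ⟨hau, Sym2.mem_mk_left a u⟩
        unfold UNet.deg
        rw [h1, h2]
        simp
      · by_cases hxb : x = b
        · obtain rfl := hxb.symm
          have h1 : W.edges.filter (fun e => b ∈ e) = {s(b,gb)} := by
            ext e
            simp only [Finset.mem_filter, hWe, Finset.mem_insert, Finset.mem_sdiff,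
              Finset.mem_singleton, not_or]
            constructor
            · rintro ⟨rfl | rfl | ⟨heU, -, -, -, hne4, -⟩, hbe⟩
              · exfalso; simp only [Sym2.mem_iff] at hbe; omega
              · rfl
              · exact absurd ((hbU e heU hbe).trans Sym2.eq_swap) hne4
            · rintro rfl
              exact ⟨Or.inr (Or.inl rfl), Sym2.mem_mk_left b gb⟩
          have h2 : U.edges.filter (fun e => b ∈ e) = {s(b,v)} := by
            ext e
            simp only [Finset.mem_filter, Finset.mem_singleton]
            constructor
            · rintro ⟨heU, hbe⟩
              exact hbU e heU hbe
            · rintro rfl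
              exact ⟨hbvE, Sym2.mem_mk_left b v⟩
          unfold UNet.deg
          rw [h1, h2]
          simp
        · by_cases hxga : x = ga
          · obtain rfl := hxga.symm
            by_cases hgagb : gb = ga
            · rw [hgagb] at hvgbE hbgbE hWe hgbb hgbu hgbv
              have hm1 : s(u,ga) ∈ U.edges.filter (fun e => ga ∈ e) :=
                Finset.mem_filter.mpr ⟨hugaE, Sym2.mem_mk_right u ga⟩
              have hm2 : s(v,ga) ∈ (U.edges.filter (fun e => ga ∈ e)).erase s(u,ga) := by
                refine Finset.mem_erase.mpr ⟨?_,
                  Finset.mem_filter.mpr ⟨hvgbE, Sym2.mem_mk_right v ga⟩⟩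
                simp only [ne_eq, Sym2.eq_iff]
                omega
              have h1 : W.edges.filter (fun e => ga ∈ e)
                  = insert s(a,ga) (insert s(b,ga)
                    (((U.edges.filter (fun e => ga ∈ e)).erase s(u,ga)).erase s(v,ga))) := by
                ext e
                simp only [Finset.mem_filter, hWe, Finset.mem_insert, Finset.mem_sdiff,
                  Finset.mem_singleton, Finset.mem_erase, not_or, ne_eq]
                constructor
                · rintro ⟨rfl | rfl | ⟨heU, hne1, hne2, hne3, hne4, hne5⟩, hgae⟩
                  · exact Or.inl rfl
                  · exact Or.inr (Or.inl rfl)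
                  · exact Or.inr (Or.inr ⟨hne5, hne3, heU, hgae⟩)
                · rintro (rfl | rfl | ⟨hne5, hne3, heU, hgae⟩)
                  · exact ⟨Or.inl rfl, Sym2.mem_mk_right a ga⟩
                  · exact ⟨Or.inr (Or.inl rfl), Sym2.mem_mk_right b ga⟩
                  · refine ⟨Or.inr (Or.inr ⟨heU, ?_, ?_, hne3, ?_, hne5⟩), hgae⟩ <;>
                      (intro h; subst h; simp only [Sym2.mem_iff] at hgae; omega)
              have hn1 : s(a,ga) ∉ insert s(b,ga)
                  (((U.edges.filter (fun e => ga ∈ e)).erase s(u,ga)).erase s(v,ga)) := by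
                intro h
                rcases Finset.mem_insert.mp h with h | h
                · simp only [Sym2.eq_iff] at h; omega
                · exact hagaE (Finset.mem_filter.mp
                    (Finset.mem_of_mem_erase (Finset.mem_of_mem_erase h))).1
              have hn2 : s(b,ga) ∉
                  ((U.edges.filter (fun e => ga ∈ e)).erase s(u,ga)).erase s(v,ga) := by
                intro h
                exact hbgbE (Finset.mem_filter.mp
                  (Finset.mem_of_mem_erase (Finset.mem_of_mem_erase h))).1
              have hc1 := Finset.card_pos.mpr ⟨_, hm2⟩
              have hc2 := Finset.card_erase_of_mem hm1
              unfold UNet.deg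
              rw [h1, Finset.card_insert_of_notMem hn1, Finset.card_insert_of_notMem hn2,
                Finset.card_erase_of_mem hm2, Finset.card_erase_of_mem hm1]
              omega
            · have hm1 : s(u,ga) ∈ U.edges.filter (fun e => ga ∈ e) :=
                Finset.mem_filter.mpr ⟨hugaE, Sym2.mem_mk_right u ga⟩
              have h1 : W.edges.filter (fun e => ga ∈ e)
                  = insert s(a,ga) ((U.edges.filter (fun e => ga ∈ e)).erase s(u,ga)) := by
                ext e
                simp only [Finset.mem_filter, hWe, Finset.mem_insert, Finset.mem_sdiff,
                  Finset.mem_singleton, Finset.mem_erase, not_or, ne_eq]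
                constructor
                · rintro ⟨rfl | rfl | ⟨heU, hne1, hne2, hne3, hne4, hne5⟩, hgae⟩
                  · exact Or.inl rfl
                  · exfalso; simp only [Sym2.mem_iff] at hgae; omega
                  · exact Or.inr ⟨hne3, heU, hgae⟩
                · rintro (rfl | ⟨hne3, heU, hgae⟩)
                  · exact ⟨Or.inl rfl, Sym2.mem_mk_right a ga⟩
                  · refine ⟨Or.inr (Or.inr ⟨heU, ?_, ?_, hne3, ?_, ?_⟩), hgae⟩ <;>
                      (intro h; subst h; simp only [Sym2.mem_iff] at hgae; omega)
              have hn1 : s(a,ga) ∉ (U.edges.filter (fun e => ga ∈ e)).erase s(u,ga) := by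
                intro h
                exact hagaE (Finset.mem_filter.mp (Finset.mem_of_mem_erase h)).1
              have hc1 := Finset.card_pos.mpr ⟨_, hm1⟩
              unfold UNet.deg
              rw [h1, Finset.card_insert_of_notMem hn1, Finset.card_erase_of_mem hm1]
              omega
          · by_cases hxgb : x = gb
            · obtain rfl := hxgb.symm
              have hm1 : s(v,gb) ∈ U.edges.filter (fun e => gb ∈ e) :=
                Finset.mem_filter.mpr ⟨hvgbE, Sym2.mem_mk_right v gb⟩
              have h1 : W.edges.filter (fun e => gb ∈ e)
                  = insert s(b,gb) ((U.edges.filter (fun e => gb ∈ e)).erase s(v,gb)) := by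
                ext e
                simp only [Finset.mem_filter, hWe, Finset.mem_insert, Finset.mem_sdiff,
                  Finset.mem_singleton, Finset.mem_erase, not_or, ne_eq]
                constructor
                · rintro ⟨rfl | rfl | ⟨heU, hne1, hne2, hne3, hne4, hne5⟩, hgbe⟩
                  · exfalso; simp only [Sym2.mem_iff] at hgbe; omega
                  · exact Or.inl rfl
                  · exact Or.inr ⟨hne5, heU, hgbe⟩
                · rintro (rfl | ⟨hne5, heU, hgbe⟩)
                  · exact ⟨Or.inr (Or.inl rfl), Sym2.mem_mk_right b gb⟩
                  · refine ⟨Or.inr (Or.inr ⟨heU, ?_, ?_, ?_, ?_, hne5⟩), hgbe⟩ <;>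
                      (intro h; subst h; simp only [Sym2.mem_iff] at hgbe; omega)
              have hn1 : s(b,gb) ∉ (U.edges.filter (fun e => gb ∈ e)).erase s(v,gb) := by
                intro h
                exact hbgbE (Finset.mem_filter.mp (Finset.mem_of_mem_erase h)).1
              have hc1 := Finset.card_pos.mpr ⟨_, hm1⟩
              unfold UNet.deg
              rw [h1, Finset.card_insert_of_notMem hn1, Finset.card_erase_of_mem hm1]
              omega
            · have h1 : W.edges.filter (fun e => x ∈ e) = U.edges.filter (fun e => x ∈ e) := by
                ext e
                simp only [Finset.mem_filter, hWe, Finset.mem_insert, Finset.mem_sdiff,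
                  Finset.mem_singleton, not_or]
                constructor
                · rintro ⟨rfl | rfl | ⟨heU, -⟩, hxe⟩
                  · exfalso; simp only [Sym2.mem_iff] at hxe; omega
                  · exfalso; simp only [Sym2.mem_iff] at hxe; omega
                  · exact ⟨heU, hxe⟩
                · rintro ⟨heU, hxe⟩
                  refine ⟨Or.inr (Or.inr ⟨heU, ?_, ?_, ?_, ?_, ?_⟩), hxe⟩ <;>
                    (intro h; subst h; simp only [Sym2.mem_iff] at hxe; omega)
              unfold UNet.deg
              rw [h1]
    refine ⟨?_, ?_, ?_, ?_⟩
    · intro e he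
      rw [hWe] at he
      simp only [Finset.mem_insert, Finset.mem_sdiff, Finset.mem_singleton, not_or] at he
      rcases he with rfl | rfl | ⟨heU, hne1, hne2, hne3, hne4, hne5⟩
      · refine ⟨by simp only [Sym2.mk_isDiag_iff]; omega, ?_⟩
        intro x hx
        rw [hWv]
        simp only [Finset.mem_sdiff, Finset.mem_insert, Finset.mem_singleton, not_or]
        simp only [Sym2.mem_iff] at hx
        rcases hx with rfl | rfl
        · exact ⟨haV, by omega, by omega⟩
        · exact ⟨hgaV, by omega, by omega⟩
      · refine ⟨by simp only [Sym2.mk_isDiag_iff]; omega, ?_⟩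
        intro x hx
        rw [hWv]
        simp only [Finset.mem_sdiff, Finset.mem_insert, Finset.mem_singleton, not_or]
        simp only [Sym2.mem_iff] at hx
        rcases hx with rfl | rfl
        · exact ⟨hbV, by omega, by omega⟩
        · exact ⟨hgbV, by omega, by omega⟩
      · refine ⟨(hE e heU).1, ?_⟩
        intro x hx
        rw [hWv]
        simp only [Finset.mem_sdiff, Finset.mem_insert, Finset.mem_singleton, not_or]
        refine ⟨(hE e heU).2 x hx, ?_, ?_⟩
        · rintro rfl
          rcases huU e heU hx with h | h | h
          exacts [hne2 h, hne1 h, hne3 h]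
        · rintro rfl
          rcases hvU e heU hx with h | h | h
          exacts [hne1 h, hne4 h, hne5 h]
    · intro x hx y hy
      rw [hWv] at hx hy
      simp only [Finset.mem_sdiff, Finset.mem_insert, Finset.mem_singleton, not_or] at hx hy
      obtain ⟨hxV, hxu, hxv⟩ := hx
      obtain ⟨hyV, hyu, hyv⟩ := hy
      have hadja : W.Adj a ga := ⟨by omega, by rw [hWe]; exact Finset.mem_insert_self _ _⟩
      have hadjb : W.Adj b gb := ⟨by omega, by
        rw [hWe]; exact Finset.mem_insert_of_mem (Finset.mem_insert_self _ _)⟩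
      have keyR : ∀ z w, (z ≠ w ∧ s(z,w) ∈ U.edges ∧ s(z,w) ≠ s(u,v)) →
          Relation.ReflTransGen W.Adj
            (if z = u then ga else if z = v then gb else z)
            (if w = u then ga else if w = v then gb else w) := by
        rintro z w ⟨hzw, hzwE, hzwne⟩
        by_cases hzu : z = u
        · obtain rfl := hzu.symm
          rcases huU _ hzwE (Sym2.mem_mk_left u w) with h | h | h
          · have hwa : w = a := by simp only [Sym2.eq_iff] at h; omega
            obtain rfl := hwa.symm
            rw [if_pos rfl, if_neg (show a ≠ u by omega), if_neg (show a ≠ v by omega)]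
            exact Relation.ReflTransGen.single (adjSymmAux W hadja)
          · exact absurd h hzwne
          · have hwga : w = ga := by simp only [Sym2.eq_iff] at h; omega
            obtain rfl := hwga.symm
            rw [if_pos rfl, if_neg hgau, if_neg hgav]
        · by_cases hwu : w = u
          · obtain rfl := hwu.symm
            rcases huU _ hzwE (Sym2.mem_mk_right z u) with h | h | h
            · have hza : z = a := by simp only [Sym2.eq_iff] at h; omega
              obtain rfl := hza.symm
              rw [if_neg (show a ≠ u by omega), if_neg (show a ≠ v by omega), if_pos rfl]
              exact Relation.ReflTransGen.single hadja
            · exact absurd h hzwne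
            · have hzga : z = ga := by simp only [Sym2.eq_iff] at h; omega
              obtain rfl := hzga.symm
              rw [if_neg hgau, if_neg hgav, if_pos rfl]
          · by_cases hzv : z = v
            · obtain rfl := hzv.symm
              rcases hvU _ hzwE (Sym2.mem_mk_left v w) with h | h | h
              · exact absurd h hzwne
              · have hwb : w = b := by simp only [Sym2.eq_iff] at h; omega
                obtain rfl := hwb.symm
                rw [if_neg (show v ≠ u by omega), if_pos rfl,
                  if_neg (show b ≠ u by omega), if_neg (show b ≠ v by omega)]
                exact Relation.ReflTransGen.single (adjSymmAux W hadjb)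
              · have hwgb : w = gb := by simp only [Sym2.eq_iff] at h; omega
                obtain rfl := hwgb.symm
                rw [if_neg (show v ≠ u by omega), if_pos rfl, if_neg hgbu, if_neg hgbv]
            · by_cases hwv : w = v
              · obtain rfl := hwv.symm
                rcases hvU _ hzwE (Sym2.mem_mk_right z v) with h | h | h
                · exfalso; simp only [Sym2.eq_iff] at h; omega
                · have hzb : z = b := by simp only [Sym2.eq_iff] at h; omega
                  obtain rfl := hzb.symm
                  rw [if_neg (show b ≠ u by omega), if_neg (show b ≠ v by omega),
                    if_neg (show v ≠ u by omega), if_pos rfl]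
                  exact Relation.ReflTransGen.single hadjb
                · have hzgb : z = gb := by simp only [Sym2.eq_iff] at h; omega
                  obtain rfl := hzgb.symm
                  rw [if_neg hgbu, if_neg hgbv, if_neg (show v ≠ u by omega), if_pos rfl]
              · rw [if_neg hzu, if_neg hzv, if_neg hwu, if_neg hwv]
                refine Relation.ReflTransGen.single ⟨hzw, ?_⟩
                rw [hWe]
                refine Finset.mem_insert_of_mem (Finset.mem_insert_of_mem
                  (Finset.mem_sdiff.mpr ⟨hzwE, ?_⟩))
                simp only [Finset.mem_insert, Finset.mem_singleton, not_or]
                refine ⟨hzwne, ?_, ?_, ?_, ?_⟩ <;>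
                  (intro h; simp only [Sym2.eq_iff] at h; omega)
      have hgagb : Relation.ReflTransGen W.Adj ga gb := by
        have hl := Relation.ReflTransGen.lift'
          (fun t => if t = u then ga else if t = v then gb else t) keyR u v hcyc.2
        simpa [Function.onFun, Ne.symm huv] using hl
      have key : ∀ z w, U.Adj z w → Relation.ReflTransGen W.Adj
          (if z = u then ga else if z = v then gb else z)
          (if w = u then ga else if w = v then gb else w) := by
        rintro z w ⟨hzw, hzwE⟩
        by_cases h : s(z,w) = s(u,v)
        · rcases Sym2.eq_iff.mp h with ⟨hz, hw⟩ | ⟨hz, hw⟩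
          · rw [hz, hw, if_pos rfl, if_neg (show v ≠ u by omega), if_pos rfl]
            exact hgagb
          · rw [hz, hw, if_neg (show v ≠ u by omega), if_pos rfl, if_pos rfl]
            exact (@Relation.ReflTransGen.stdSymm _ W.Adj ⟨fun x y h => adjSymmAux W h⟩).symm _ _ hgagb
        · exact keyR z w ⟨hzw, hzwE, h⟩
      have hpath := Relation.ReflTransGen.lift'
        (fun t => if t = u then ga else if t = v then gb else t) key x y (hConn x hxV y hyV)
      simpa [Function.onFun, hxu, hxv, hyu, hyv] using hpath
    · intro x hx
      rw [hWv] at hx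
      simp only [Finset.mem_sdiff, Finset.mem_insert, Finset.mem_singleton, not_or] at hx
      rw [hdegW x hx.2.1 hx.2.2]
      exact hDeg x hx.1
    · intro x
      constructor
      · rintro ⟨hxV, hxD⟩
        rw [hWv] at hxV
        simp only [Finset.mem_sdiff, Finset.mem_insert, Finset.mem_singleton, not_or] at hxV
        rw [hdegW x hxV.2.1 hxV.2.2] at hxD
        exact (hLeaf x).mp ⟨hxV.1, hxD⟩
      · intro hx
        obtain ⟨hxV, hxD⟩ := (hLeaf x).mpr hx
        have hxu : x ≠ u := by rintro rfl; omega
        have hxv : x ≠ v := by rintro rfl; omega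
        refine ⟨?_, by rw [hdegW x hxu hxv]; exact hxD⟩
        rw [hWv]
        simp only [Finset.mem_sdiff, Finset.mem_insert, Finset.mem_singleton, not_or]
        exact ⟨hxV, hxu, hxv⟩
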